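/- arXiv:1711.06397 — 2 statements merged into one kernel-verified Lean document; each statement's English description precedes it below -/
import Mathlib

section
/- For any min-iso-cut X for a terminal t_i (a minimum (t_i, T \ {t_i})-cut), there exists a minimum multiterminal cut {V_1,…,V_p} for T with X ⊆ V_i. -/
open Finset

variable {V : Type*} [Fintype V] [DecidableEq V]

/-- The size of the cut `(S, V \ S)`: total weight of edges with exactly one
endpoint in `S` (each such edge `uv` with `u ∈ S`, `v ∉ S` counted once). -/
def cutSize (w : V → V → ℕ) (S : Finset V) : ℕ :=
  ∑ u ∈ S, ∑ v ∈ Sᶜ, w u v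

/-- `X` is an `(S,T)`-cut: `S ⊆ X ⊆ V \ T`. -/
def IsSTCut (S T X : Finset V) : Prop := S ⊆ X ∧ Disjoint X T

/-- `X` is a minimum `(S,T)`-cut. -/
def IsMinSTCut (w : V → V → ℕ) (S T X : Finset V) : Prop :=
  IsSTCut S T X ∧ ∀ Y : Finset V, IsSTCut S T Y → cutSize w X ≤ cutSize w Y

/-- `X` is the maximum-volume minimum `(S,T)`-cut: a minimum `(S,T)`-cut
containing every minimum `(S,T)`-cut. -/
def IsMaxVolMinCut (w : V → V → ℕ) (S T X : Finset V) : Prop :=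
  IsMinSTCut w S T X ∧ ∀ Y : Finset V, IsMinSTCut w S T Y → Y ⊆ X

/-- The minimum isolating cut size for terminal `t` w.r.t. terminal set `T`. -/
noncomputable def isoMu (w : V → V → ℕ) (T : Finset V) (t : V) : ℕ :=
  sInf {n | ∃ X : Finset V, t ∈ X ∧ Disjoint X (T.erase t) ∧ cutSize w X = n}

/-- The weight function obtained from `w` by deleting the edge `uv`. -/
def deleteEdge (w : V → V → ℕ) (u v : V) : V → V → ℕ :=
  fun a b => if (a = u ∧ b = v) ∨ (a = v ∧ b = u) then 0 else w a b

/-- A multiterminal cut for terminals `t 0, …, t (p-1)`, given as the function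
assigning each vertex to its part: terminal `t i` must lie in part `i`. -/
def IsMTC {p : ℕ} (t : Fin p → V) (f : V → Fin p) : Prop :=
  ∀ i, f (t i) = i

/-- The size of a multiterminal cut: total weight of crossing edges
(each unordered pair is counted twice in the double sum, hence the `/ 2`). -/
def mtcSize {p : ℕ} (w : V → V → ℕ) (f : V → Fin p) : ℚ :=
  (∑ u : V, ∑ v : V, if f u = f v then 0 else (w u v : ℚ)) / 2

/-- A minimum multiterminal cut. -/
def IsMinMTC {p : ℕ} (w : V → V → ℕ) (t : Fin p → V) (f : V → Fin p) : Prop :=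
  IsMTC t f ∧ ∀ g : V → Fin p, IsMTC t g → mtcSize w f ≤ mtcSize w g

set_option linter.unusedSectionVars false

section Aux

open Finset

variable {V : Type*} [Fintype V] [DecidableEq V]

/-- Twice the multiterminal cut size, as a natural number. -/
def crossN {p : ℕ} (w : V → V → ℕ) (f : V → Fin p) : ℕ :=
  ∑ u : V, ∑ v : V, if f u = f v then 0 else w u v

/-- Crossing weight among pairs outside `S`. -/
def outCross {p : ℕ} (w : V → V → ℕ) (f : V → Fin p) (S : Finset V) : ℕ :=
  ∑ u : V, ∑ v : V, if u ∉ S ∧ v ∉ S ∧ f u ≠ f v then w u v else 0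

lemma mtcSize_eq_crossN {p : ℕ} (w : V → V → ℕ) (f : V → Fin p) :
    mtcSize w f = (crossN w f : ℚ) / 2 := by
  unfold mtcSize crossN
  push_cast
  ring

lemma cutSize_eq (w : V → V → ℕ) (S : Finset V) :
    cutSize w S = ∑ u : V, ∑ v : V, if u ∈ S ∧ v ∉ S then w u v else 0 := by
  unfold cutSize
  rw [show (∑ u ∈ S, ∑ v ∈ Sᶜ, w u v) = ∑ u : V, if u ∈ S then ∑ v ∈ Sᶜ, w u v else 0 by
    rw [Finset.sum_ite_mem, Finset.univ_inter]]
  apply Finset.sum_congr rfl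
  intro u _
  by_cases hu : u ∈ S
  · simp only [hu, if_true, true_and]
    rw [show (∑ v ∈ Sᶜ, w u v) = ∑ v : V, if v ∈ Sᶜ then w u v else 0 by
      rw [Finset.sum_ite_mem, Finset.univ_inter]]
    apply Finset.sum_congr rfl
    intro v _
    simp [Finset.mem_compl]
  · simp [hu]

lemma cutSize_submodular (w : V → V → ℕ) (A X : Finset V) :
    cutSize w (A ∪ X) + cutSize w (A ∩ X) ≤ cutSize w A + cutSize w X := by
  simp only [cutSize_eq]
  rw [← Finset.sum_add_distrib, ← Finset.sum_add_distrib]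
  apply Finset.sum_le_sum
  intro u _
  rw [← Finset.sum_add_distrib, ← Finset.sum_add_distrib]
  apply Finset.sum_le_sum
  intro v _
  by_cases h1 : u ∈ A <;> by_cases h2 : u ∈ X <;> by_cases h3 : v ∈ A <;>
    by_cases h4 : v ∈ X <;>
    simp [Finset.mem_union, Finset.mem_inter, h1, h2, h3, h4]

lemma crossN_decomp {p : ℕ} (w : V → V → ℕ) (hsymm : ∀ u v, w u v = w v u)
    (f : V → Fin p) (i : Fin p) :
    crossN w f = 2 * cutSize w (Finset.univ.filter (fun v => f v = i))
      + outCross w f (Finset.univ.filter (fun v => f v = i)) := by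
  set S := Finset.univ.filter (fun v => f v = i) with hS
  have hmem : ∀ v, v ∈ S ↔ f v = i := by intro v; simp [hS]
  have key : crossN w f
      = (∑ u : V, ∑ v : V, if u ∈ S ∧ v ∉ S then w u v else 0)
      + (∑ u : V, ∑ v : V, if u ∉ S ∧ v ∈ S then w u v else 0)
      + outCross w f S := by
    unfold crossN outCross
    rw [← Finset.sum_add_distrib, ← Finset.sum_add_distrib]
    apply Finset.sum_congr rfl
    intro u _
    rw [← Finset.sum_add_distrib, ← Finset.sum_add_distrib]
    apply Finset.sum_congr rfl
    intro v _
    by_cases h1 : u ∈ S <;> by_cases h2 : v ∈ S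
    · have : f u = f v := by rw [(hmem u).1 h1, (hmem v).1 h2]
      simp [h1, h2, this]
    · have : f u ≠ f v := by
        rw [(hmem u).1 h1]; intro h; exact h2 ((hmem v).2 h.symm)
      simp [h1, h2, this]
    · have : f u ≠ f v := by
        rw [(hmem v).1 h2]; intro h; exact h1 ((hmem u).2 h)
      simp [h1, h2, this]
    · by_cases h3 : f u = f v <;> simp [h1, h2, h3]
  have swap : (∑ u : V, ∑ v : V, if u ∉ S ∧ v ∈ S then w u v else 0)
      = cutSize w S := by
    rw [cutSize_eq, Finset.sum_comm]
    apply Finset.sum_congr rfl; intro u _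
    apply Finset.sum_congr rfl; intro v _
    rw [hsymm]
    by_cases h1 : u ∈ S <;> by_cases h2 : v ∈ S <;> simp [h1, h2]
  rw [key, swap, ← cutSize_eq]
  ring

lemma exists_min_crossN {p : ℕ} (i0 : Fin p) (t : Fin p → V) (ht : Function.Injective t)
    (w : V → V → ℕ) :
    ∃ f : V → Fin p, IsMTC t f ∧ ∀ g : V → Fin p, IsMTC t g → crossN w f ≤ crossN w g := by
  classical
  have hne : (Finset.univ.filter (fun f : V → Fin p => IsMTC t f)).Nonempty := by
    refine ⟨fun v => if h : ∃ j, t j = v then h.choose else i0, ?_⟩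
    · simp only [Finset.mem_filter, Finset.mem_univ, true_and]
      intro j
      have h : ∃ j', t j' = t j := ⟨j, rfl⟩
      simp only [dif_pos h]
      exact ht h.choose_spec
  obtain ⟨f, hf, hmin⟩ := Finset.exists_min_image _ (crossN w) hne
  simp only [Finset.mem_filter, Finset.mem_univ, true_and] at hf hmin
  exact ⟨f, hf, hmin⟩

end Aux

/-- For any minimum isolating cut X for terminal t i, there is a minimum
multiterminal cut whose i-th part contains X. -/
theorem minIsoCut_extends_to_minMTC {p : ℕ} (hp : 2 ≤ p)
    (w : V → V → ℕ) (hsymm : ∀ u v, w u v = w v u)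
    (t : Fin p → V) (ht : Function.Injective t) (i : Fin p) (X : Finset V)
    (hX : IsMinSTCut w {t i} ((Finset.univ.image t).erase (t i)) X) :
    ∃ f : V → Fin p, IsMinMTC w t f ∧ ∀ x ∈ X, f x = i := by
  classical
  obtain ⟨⟨hsub, hdisj⟩, hmin⟩ := hX
  have htiX : t i ∈ X := hsub (Finset.mem_singleton_self _)
  obtain ⟨f, hfMTC, hfmin⟩ := exists_min_crossN i t ht w
  set g : V → Fin p := fun v => if v ∈ X then i else f v with hg
  have hgX : ∀ x ∈ X, g x = i := fun x hx => by simp [hg, hx]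
  have hgMTC : IsMTC t g := by
    intro j
    by_cases hj : j = i
    · subst hj; simp [hg, htiX]
    · have hnotX : t j ∉ X := by
        intro hmem
        have hin : t j ∈ (Finset.univ.image t).erase (t i) := by
          refine Finset.mem_erase.2 ⟨?_, Finset.mem_image_of_mem t (Finset.mem_univ j)⟩
          intro h; exact hj (ht h)
        exact (Finset.disjoint_left.1 hdisj hmem) hin
      simp [hg, hnotX, hfMTC j]
  set A := Finset.univ.filter (fun v => f v = i) with hA
  have htiA : t i ∈ A := by simp [hA, hfMTC i]
  have hSg : Finset.univ.filter (fun v => g v = i) = A ∪ X := by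
    ext v
    simp only [Finset.mem_filter, Finset.mem_univ, true_and, Finset.mem_union, hA, hg]
    by_cases hv : v ∈ X <;> simp [hv]
  have hcutAX : cutSize w (A ∪ X) ≤ cutSize w A := by
    have h1 : cutSize w X ≤ cutSize w (A ∩ X) := by
      apply hmin
      constructor
      · simp [Finset.singleton_subset_iff, Finset.mem_inter, htiA, htiX]
      · exact Finset.disjoint_of_subset_left Finset.inter_subset_right hdisj
    have h2 := cutSize_submodular w A X
    omega
  have hout : outCross w g (A ∪ X) ≤ outCross w f A := by
    unfold outCross
    apply Finset.sum_le_sum; intro u _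
    apply Finset.sum_le_sum; intro v _
    split_ifs with h1 h2 h3
    · exact le_refl _
    · exfalso
      obtain ⟨hu, hv, hne⟩ := h1
      simp only [Finset.mem_union, not_or] at hu hv
      apply h2
      refine ⟨hu.1, hv.1, ?_⟩
      have egu : g u = f u := by simp [hg, hu.2]
      have egv : g v = f v := by simp [hg, hv.2]
      rwa [egu, egv] at hne
    · exact Nat.zero_le _
    · exact le_refl _
  have hNg : crossN w g ≤ crossN w f := by
    have e1 := crossN_decomp w hsymm g i
    have e2 := crossN_decomp w hsymm f i
    rw [hSg] at e1
    rw [← hA] at e2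
    omega
  refine ⟨g, ⟨hgMTC, ?_⟩, hgX⟩
  intro h hh
  rw [mtcSize_eq_crossN, mtcSize_eq_crossN]
  have hle : crossN w g ≤ crossN w h := le_trans hNg (hfmin h hh)
  have hle2 : (crossN w g : ℚ) ≤ (crossN w h : ℚ) := Nat.cast_le.2 hle
  linarith
end

section
/- The extension X_i(v) = C' \ C is connected in the induced subgraph G[X_i(v)], where C is the max-vol minimum (t_i, T\{t_i})-cut and C' is the max-vol minimum ({t_i, v}, T\{t_i})-cut, for any non-terminal vertex v. -/
open Finset

variable {V : Type*} [Fintype V] [DecidableEq V]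

/-! ### Auxiliary lemmas -/

/-- Total weight of edges from `A` to `B`. -/
private def Wt (w : V → V → ℕ) (A B : Finset V) : ℕ := ∑ a ∈ A, ∑ b ∈ B, w a b

private lemma Wt_union_left (w : V → V → ℕ) {A B : Finset V} (C : Finset V)
    (h : Disjoint A B) : Wt w (A ∪ B) C = Wt w A C + Wt w B C :=
  Finset.sum_union h

private lemma Wt_union_right (w : V → V → ℕ) (A : Finset V) {B C : Finset V}
    (h : Disjoint B C) : Wt w A (B ∪ C) = Wt w A B + Wt w A C := by
  simp only [Wt, Finset.sum_union h, Finset.sum_add_distrib]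

private lemma cutSize_eq_Wt (w : V → V → ℕ) (S : Finset V) :
    cutSize w S = Wt w S Sᶜ := rfl

/-- Submodularity of the cut function. -/
private lemma cut_submod (w : V → V → ℕ) (A B : Finset V) :
    cutSize w (A ∩ B) + cutSize w (A ∪ B) ≤ cutSize w A + cutSize w B := by
  set P1 := A ∩ B with hP1
  set P2 := A \ B with hP2
  set P3 := B \ A with hP3
  set P4 := (A ∪ B)ᶜ with hP4
  have d12 : Disjoint P1 P2 := by
    simp only [Finset.disjoint_left, hP1, hP2, mem_inter, mem_sdiff]; tauto
  have d13 : Disjoint P1 P3 := by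
    simp only [Finset.disjoint_left, hP1, hP3, mem_inter, mem_sdiff]; tauto
  have d23 : Disjoint P2 P3 := by
    simp only [Finset.disjoint_left, hP2, hP3, mem_sdiff]; tauto
  have d34 : Disjoint P3 P4 := by
    simp only [Finset.disjoint_left, hP3, hP4, mem_sdiff, mem_compl, mem_union]; tauto
  have d24 : Disjoint P2 P4 := by
    simp only [Finset.disjoint_left, hP2, hP4, mem_sdiff, mem_compl, mem_union]; tauto
  have d2_34 : Disjoint P2 (P3 ∪ P4) := by
    simp only [Finset.disjoint_union_right]; exact ⟨d23, d24⟩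
  have hA : A = P1 ∪ P2 := by
    ext x; simp only [hP1, hP2, mem_union, mem_inter, mem_sdiff]; tauto
  have hAc : Aᶜ = P3 ∪ P4 := by
    ext x; simp only [hP3, hP4, mem_union, mem_compl, mem_sdiff]; tauto
  have hB : B = P1 ∪ P3 := by
    ext x; simp only [hP1, hP3, mem_union, mem_inter, mem_sdiff]; tauto
  have hBc : Bᶜ = P2 ∪ P4 := by
    ext x; simp only [hP2, hP4, mem_union, mem_compl, mem_sdiff]; tauto
  have hIc : P1ᶜ = P2 ∪ (P3 ∪ P4) := by
    ext x; simp only [hP1, hP2, hP3, hP4, mem_union, mem_compl, mem_inter, mem_sdiff]; tauto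
  have hU : A ∪ B = P1 ∪ (P2 ∪ P3) := by
    ext x; simp only [hP1, hP2, hP3, mem_union, mem_inter, mem_sdiff]; tauto
  have d1_23 : Disjoint P1 (P2 ∪ P3) := by
    simp only [Finset.disjoint_union_right]; exact ⟨d12, d13⟩
  have eA : cutSize w A = Wt w P1 P3 + Wt w P1 P4 + (Wt w P2 P3 + Wt w P2 P4) := by
    rw [cutSize_eq_Wt, hAc]; conv_lhs => rw [hA]
    rw [Wt_union_left w _ d12, Wt_union_right w _ d34, Wt_union_right w _ d34]
  have eB : cutSize w B = Wt w P1 P2 + Wt w P1 P4 + (Wt w P3 P2 + Wt w P3 P4) := by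
    rw [cutSize_eq_Wt, hBc]; conv_lhs => rw [hB]
    rw [Wt_union_left w _ d13, Wt_union_right w _ d24, Wt_union_right w _ d24]
  have eI : cutSize w P1 = Wt w P1 P2 + (Wt w P1 P3 + Wt w P1 P4) := by
    rw [cutSize_eq_Wt, hIc,
      Wt_union_right w _ d2_34, Wt_union_right w _ d34]
  have eU : cutSize w (A ∪ B) = Wt w P1 P4 + (Wt w P2 P4 + Wt w P3 P4) := by
    rw [cutSize_eq_Wt, ← hP4]; conv_lhs => rw [hU]
    rw [Wt_union_left w _ d1_23, Wt_union_left w _ d23]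
  omega

/-- The max-vol min isolating cut for `ti` is contained in the one
for `{ti, v}`. -/
private lemma maxvol_subset (w : V → V → ℕ) (T : Finset V) (ti v : V)
    (C C' : Finset V)
    (hC : IsMaxVolMinCut w {ti} (T.erase ti) C)
    (hC' : IsMaxVolMinCut w {ti, v} (T.erase ti) C') : C ⊆ C' := by
  have hti_C : ti ∈ C := hC.1.1.1 (mem_singleton_self ti)
  have hti_C' : ti ∈ C' := hC'.1.1.1 (mem_insert_self ti {v})
  have h1 : cutSize w C ≤ cutSize w (C ∩ C') :=
    hC.1.2 _ ⟨singleton_subset_iff.2 (mem_inter.2 ⟨hti_C, hti_C'⟩),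
      hC.1.1.2.mono_left inter_subset_left⟩
  have hU : IsSTCut {ti, v} (T.erase ti) (C ∪ C') :=
    ⟨hC'.1.1.1.trans subset_union_right,
      Finset.disjoint_union_left.2 ⟨hC.1.1.2, hC'.1.1.2⟩⟩
  have h2 : cutSize w C' ≤ cutSize w (C ∪ C') := hC'.1.2 _ hU
  have h3 := cut_submod w C C'
  have heq : cutSize w (C ∪ C') ≤ cutSize w C' := by omega
  have hmin : IsMinSTCut w {ti, v} (T.erase ti) (C ∪ C') :=
    ⟨hU, fun Y hY => heq.trans (hC'.1.2 Y hY)⟩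
  exact subset_union_left.trans (hC'.2 _ hmin)

/-- Key lemma: a "component" `D` of the extension `C' \ C` (no positive-weight
edges leaving `D` into the rest of the extension) must contain `v`. -/
private lemma key_lemma (w : V → V → ℕ) (T : Finset V) (ti v : V)
    (C C' : Finset V)
    (hC : IsMaxVolMinCut w {ti} (T.erase ti) C)
    (hC' : IsMaxVolMinCut w {ti, v} (T.erase ti) C')
    (hsub : C ⊆ C')
    (D : Finset V) (hD : D ⊆ C' \ C) (hDne : D.Nonempty)
    (hedge : ∀ x ∈ D, ∀ y ∈ (C' \ C) \ D, w x y = 0 ∧ w y x = 0) :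
    v ∈ D := by
  by_contra hvD
  set E := (C' \ C) \ D with hE
  set O := C'ᶜ with hO
  have hti_C : ti ∈ C := hC.1.1.1 (mem_singleton_self ti)
  have hti_C' : ti ∈ C' := hsub hti_C
  have hv_C' : v ∈ C' := hC'.1.1.1 (mem_insert_of_mem (mem_singleton_self v))
  have hDX : ∀ x ∈ D, x ∈ C' ∧ x ∉ C := by
    intro x hx; have := hD hx; rw [mem_sdiff] at this; exact this
  have dCD : Disjoint C D :=
    Finset.disjoint_left.2 fun x hx hx' => (hDX x hx').2 hx
  have dCE : Disjoint C E := Finset.disjoint_left.2 fun x hx hx' => by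
    rw [hE, mem_sdiff, mem_sdiff] at hx'; exact hx'.1.2 hx
  have dCO : Disjoint C O := Finset.disjoint_left.2 fun x hx hx' => by
    rw [hO, mem_compl] at hx'; exact hx' (hsub hx)
  have dDE : Disjoint D E := Finset.disjoint_left.2 fun x hx hx' => by
    rw [hE, mem_sdiff] at hx'; exact hx'.2 hx
  have dDO : Disjoint D O := Finset.disjoint_left.2 fun x hx hx' => by
    rw [hO, mem_compl] at hx'; exact hx' (hDX x hx).1
  have dEO : Disjoint E O := Finset.disjoint_left.2 fun x hx hx' => by
    rw [hE, mem_sdiff, mem_sdiff] at hx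
    rw [hO, mem_compl] at hx'; exact hx' hx.1.1
  have dD_EO : Disjoint D (E ∪ O) := Finset.disjoint_union_right.2 ⟨dDE, dDO⟩
  have dD_O : Disjoint D O := dDO
  -- partition equalities
  have hCc : Cᶜ = D ∪ (E ∪ O) := by
    ext x
    simp only [hE, hO, mem_union, mem_compl, mem_sdiff]
    constructor
    · intro hx
      by_cases h1 : x ∈ C'
      · by_cases h2 : x ∈ D
        · exact Or.inl h2
        · exact Or.inr (Or.inl ⟨⟨h1, hx⟩, h2⟩)
      · exact Or.inr (Or.inr h1)
    · rintro (h | ⟨⟨_, h⟩, _⟩ | h)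
      · exact (hDX x h).2
      · exact h
      · exact fun hc => h (hsub hc)
  have hCDc : (C ∪ D)ᶜ = E ∪ O := by
    ext x
    simp only [hE, hO, mem_union, mem_compl, mem_sdiff]
    constructor
    · intro hx
      push_neg at hx
      by_cases h1 : x ∈ C'
      · exact Or.inl ⟨⟨h1, hx.1⟩, hx.2⟩
      · exact Or.inr h1
    · rintro (⟨⟨h1, h2⟩, h3⟩ | h)
      · push_neg; exact ⟨h2, h3⟩
      · push_neg; exact ⟨fun hc => h (hsub hc), fun hd => h (hDX x hd).1⟩
  have hC'eq : C' = C ∪ (D ∪ E) := by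
    ext x
    simp only [hE, mem_union, mem_sdiff]
    constructor
    · intro hx
      by_cases h1 : x ∈ C
      · exact Or.inl h1
      · by_cases h2 : x ∈ D
        · exact Or.inr (Or.inl h2)
        · exact Or.inr (Or.inr ⟨⟨hx, h1⟩, h2⟩)
    · rintro (h | h | ⟨⟨h, _⟩, _⟩)
      · exact hsub h
      · exact (hDX x h).1
      · exact h
  have hC'D : C' \ D = C ∪ E := by
    ext x
    simp only [hE, mem_union, mem_sdiff]
    constructor
    · rintro ⟨h1, h2⟩
      by_cases h3 : x ∈ C
      · exact Or.inl h3
      · exact Or.inr ⟨⟨h1, h3⟩, h2⟩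
    · rintro (h | ⟨⟨h1, _⟩, h2⟩)
      · exact ⟨hsub h, fun hd => (hDX x hd).2 h⟩
      · exact ⟨h1, h2⟩
  have hC'Dc : (C' \ D)ᶜ = D ∪ O := by
    ext x
    simp only [hO, mem_union, mem_compl, mem_sdiff]
    constructor
    · intro hx
      push_neg at hx
      by_cases h1 : x ∈ C'
      · exact Or.inl (hx h1)
      · exact Or.inr h1
    · rintro (h | h)
      · exact fun hx => absurd h hx.2
      · exact fun hx => absurd hx.1 h
  -- cut size computations
  have eC : cutSize w C = Wt w C D + (Wt w C E + Wt w C O) := by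
    rw [cutSize_eq_Wt, hCc, Wt_union_right w _ dD_EO, Wt_union_right w _ dEO]
  have eCD : cutSize w (C ∪ D) = (Wt w C E + Wt w C O) + (Wt w D E + Wt w D O) := by
    rw [cutSize_eq_Wt, hCDc, Wt_union_left w _ dCD,
      Wt_union_right w _ dEO, Wt_union_right w _ dEO]
  have dC_DE : Disjoint C (D ∪ E) := Finset.disjoint_union_right.2 ⟨dCD, dCE⟩
  have eC' : cutSize w C' = Wt w C O + (Wt w D O + Wt w E O) := by
    rw [cutSize_eq_Wt, ← hO]; conv_lhs => rw [hC'eq]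
    rw [Wt_union_left w _ dC_DE, Wt_union_left w _ dDE]
  have eC'D : cutSize w (C' \ D) = (Wt w C D + Wt w C O) + (Wt w E D + Wt w E O) := by
    rw [cutSize_eq_Wt, hC'Dc]; conv_lhs => rw [hC'D]
    rw [Wt_union_left w _ dCE, Wt_union_right w _ dDO, Wt_union_right w _ dDO]
  have hDE0 : Wt w D E = 0 :=
    Finset.sum_eq_zero fun x hx => Finset.sum_eq_zero fun y hy =>
      (hedge x hx y hy).1
  have hED0 : Wt w E D = 0 :=
    Finset.sum_eq_zero fun y hy => Finset.sum_eq_zero fun x hx =>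
      (hedge x hx y hy).2
  -- cut validity and min/max-vol facts
  have hDC' : D ⊆ C' := fun x hx => (hDX x hx).1
  have hCDcut : IsSTCut {ti} (T.erase ti) (C ∪ D) :=
    ⟨singleton_subset_iff.2 (mem_union_left _ hti_C),
      Finset.disjoint_union_left.2 ⟨hC.1.1.2, hC'.1.1.2.mono_left hDC'⟩⟩
  have hmin1 : cutSize w C ≤ cutSize w (C ∪ D) := hC.1.2 _ hCDcut
  have hne1 : cutSize w (C ∪ D) ≠ cutSize w C := by
    intro heq
    have hmin : IsMinSTCut w {ti} (T.erase ti) (C ∪ D) :=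
      ⟨hCDcut, fun Y hY => heq.le.trans (hC.1.2 Y hY)⟩
    have hsub2 : C ∪ D ⊆ C := hC.2 _ hmin
    obtain ⟨d, hd⟩ := hDne
    exact (hDX d hd).2 (hsub2 (mem_union_right _ hd))
  have hmin2 : cutSize w C' ≤ cutSize w (C' \ D) := by
    refine hC'.1.2 _ ⟨?_, hC'.1.1.2.mono_left sdiff_subset⟩
    intro x hx
    rw [mem_insert, mem_singleton] at hx
    rcases hx with rfl | rfl
    · exact mem_sdiff.2 ⟨hti_C', fun hd => (hDX x hd).2 hti_C⟩
    · exact mem_sdiff.2 ⟨hv_C', hvD⟩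
  omega

/-- The extension X_i(v) = C' \ C induces a connected subgraph, where C and C'
are the max-vol minimum isolating cuts for t_i and for {t_i, v} respectively. -/
theorem extension_connected (w : V → V → ℕ) (hsymm : ∀ u v, w u v = w v u)
    (T : Finset V) (ti : V) (hti : ti ∈ T) (v : V) (hv : v ∉ T)
    (C C' : Finset V)
    (hC : IsMaxVolMinCut w {ti} (T.erase ti) C)
    (hC' : IsMaxVolMinCut w {ti, v} (T.erase ti) C')
    (hne : (C' \ C).Nonempty) :
    ((SimpleGraph.fromRel fun a b => 0 < w a b).induce
      (↑(C' \ C) : Set V)).Connected := by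
  classical
  have hsub : C ⊆ C' := maxvol_subset w T ti v C C' hC hC'
  set X := C' \ C with hX
  set G := SimpleGraph.fromRel fun a b : V => 0 < w a b with hG
  have main : ∀ a, ∀ ha : a ∈ X, ∃ hvX : v ∈ X,
      (G.induce (↑X : Set V)).Reachable ⟨a, Finset.mem_coe.2 ha⟩
        ⟨v, Finset.mem_coe.2 hvX⟩ := by
    intro a ha
    set D := X.filter (fun b => ∃ hb : b ∈ X,
      (G.induce (↑X : Set V)).Reachable ⟨a, Finset.mem_coe.2 ha⟩
        ⟨b, Finset.mem_coe.2 hb⟩) with hDdef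
    have hDsub : D ⊆ X := filter_subset _ _
    have haD : a ∈ D := mem_filter.2 ⟨ha, ha, SimpleGraph.Reachable.refl _⟩
    have hedge : ∀ x ∈ D, ∀ y ∈ X \ D, w x y = 0 ∧ w y x = 0 := by
      intro x hx y hy
      rw [mem_sdiff] at hy
      obtain ⟨hxX, hxE, hreach⟩ := mem_filter.1 hx
      have hxy : x ≠ y := fun h => hy.2 (h ▸ hx)
      have hnadj : ¬ G.Adj x y := by
        intro hadj
        apply hy.2
        refine mem_filter.2 ⟨hy.1, hy.1, ?_⟩
        have hadj' : (G.induce (↑X : Set V)).Adj ⟨x, Finset.mem_coe.2 hxE⟩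
            ⟨y, Finset.mem_coe.2 hy.1⟩ := hadj
        exact hreach.trans hadj'.reachable
      rw [hG, SimpleGraph.fromRel_adj] at hnadj
      push_neg at hnadj
      have := hnadj hxy
      exact ⟨Nat.le_zero.1 this.1, Nat.le_zero.1 this.2⟩
    have hvD : v ∈ D :=
      key_lemma w T ti v C C' hC hC' hsub D hDsub ⟨a, haD⟩ hedge
    obtain ⟨hvX, hreach⟩ := (mem_filter.1 hvD).2
    exact ⟨hvX, hreach⟩
  obtain ⟨x0, hx0⟩ := hne
  rw [SimpleGraph.connected_iff]
  constructor
  · intro u₁ u₂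
    obtain ⟨x, hx⟩ := u₁
    obtain ⟨y, hy⟩ := u₂
    obtain ⟨hvX, h1⟩ := main x (Finset.mem_coe.1 hx)
    obtain ⟨_, h2⟩ := main y (Finset.mem_coe.1 hy)
    exact h1.trans h2.symm
  · exact ⟨⟨x0, Finset.mem_coe.2 hx0⟩⟩
end
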